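/- Let n ≥ 3 and u ∈ BD_dev(ℝⁿ). Then for every x ∈ ℝⁿ, every τ > 0 and every 0 < ϱ < τ: (1) A_{ϱ,x}[u] = −(1/ω_n)·∫_{B_τ(x)\B_ϱ(x)} (Γ(y−x)/|y−x|ⁿ) dℰ_d u(y) + A_{τ,x}[u], where Γ(z)M := (Mz⊗z − z⊗Mz)/|z|²; (2) γ_{ϱ,x}[u]·Id = −(1/((n−1)ω_n))·∫_{B_τ(x)\B_ϱ(x)} (Ξ(y−x)/|y−x|ⁿ) dℰ_d u(y) + γ_{τ,x}[u]·Id, where Ξ(z)M := ((zᵀMz)/|z|² − tr(M)/n)·Id; (3) s_{ϱ,x}[u] = −(1/((n−1)ω_n))·∫_{B_τ(x)\B_ϱ(x)} (Υ(y−x)/|y−x|^{n+1}) dℰ_d u(y) + s_{τ,x}[u], where Υ(z)M := 2Mz/|z| − (n+2)·((zᵀMz)/|z|²)·z/|z| + tr(M)·z/|z|. Here the integrals against the matrix-valued measure ℰ_d u mean integrating the indicated zero-homogeneous tensor applied to the polar density dℰ_d u/d|ℰ_d u| against |ℰ_d u|. -/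

import Mathlib

open MeasureTheory Filter Topology Metric

/-- Partial derivative `∂_j f` of a scalar function on Euclidean space. -/
noncomputable def pdsE {n : ℕ} (j : Fin n) (f : EuclideanSpace ℝ (Fin n) → ℝ) :
    EuclideanSpace ℝ (Fin n) → ℝ :=
  fun x => fderiv ℝ f x (EuclideanSpace.single j 1)

/-- `a ⊗_{ℰ_d} b := a⊙b − ((a·b)/n)·Id` (on coordinates). -/
noncomputable def edT (n : ℕ) (a b : Fin n → ℝ) (i j : Fin n) : ℝ :=
  (a i * b j + a j * b i) / 2
    - ((∑ l, a l * b l) / (n : ℝ)) * (if i = j then 1 else 0)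

/-- The `(n−1)`-dimensional Hausdorff measure on `ℝⁿ`. -/
noncomputable def Hm (n : ℕ) : Measure (EuclideanSpace ℝ (Fin n)) :=
  μH[(n : ℝ) - 1]

/-- `ω_n`, the volume of the unit ball of `ℝⁿ`. -/
noncomputable def omegaN (n : ℕ) : ℝ :=
  (volume (ball (0 : EuclideanSpace ℝ (Fin n)) 1)).toReal

/-- `s_{ρ,x}[T] = (1/((n−1)ω_n ρ^{n+1})) ∫_{∂B_ρ(x)} [T − n(ν·T)ν] dH^{n−1}`. -/
noncomputable def sBall {n : ℕ} (x : EuclideanSpace ℝ (Fin n)) (ρ : ℝ)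
    (T : EuclideanSpace ℝ (Fin n) → EuclideanSpace ℝ (Fin n)) (k : Fin n) : ℝ :=
  (1 / (((n : ℝ) - 1) * omegaN n * ρ ^ (n + 1))) *
    ∫ y in sphere x ρ,
      (T y k - (n : ℝ) * (∑ i, (y i - x i) / ρ * T y i) * ((y k - x k) / ρ)) ∂(Hm n)

/-- `A_{ρ,x}[T] = (1/(2ω_n ρⁿ)) ∫_{∂B_ρ(x)} [T⊗ν − ν⊗T] dH^{n−1}`. -/
noncomputable def ABall {n : ℕ} (x : EuclideanSpace ℝ (Fin n)) (ρ : ℝ)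
    (T : EuclideanSpace ℝ (Fin n) → EuclideanSpace ℝ (Fin n)) (i j : Fin n) : ℝ :=
  (1 / (2 * omegaN n * ρ ^ n)) *
    ∫ y in sphere x ρ,
      (T y i * ((y j - x j) / ρ) - ((y i - x i) / ρ) * T y j) ∂(Hm n)

/-- `γ_{ρ,x}[T] = (1/(nω_n ρⁿ)) ∫_{∂B_ρ(x)} T·ν dH^{n−1}`. -/
noncomputable def gBall {n : ℕ} (x : EuclideanSpace ℝ (Fin n)) (ρ : ℝ)
    (T : EuclideanSpace ℝ (Fin n) → EuclideanSpace ℝ (Fin n)) : ℝ :=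
  (1 / ((n : ℝ) * omegaN n * ρ ^ n)) *
    ∫ y in sphere x ρ, (∑ i, T y i * ((y i - x i) / ρ)) ∂(Hm n)

/-- `T` is an (interior) boundary trace of `u` on `∂B_ρ(x)`, i.e. the Gauss–Green
formula holds on `B_ρ(x)` with boundary term written through `T`. -/
noncomputable def IsSphereTrace {n : ℕ}
    (u : EuclideanSpace ℝ (Fin n) → EuclideanSpace ℝ (Fin n))
    (ν : Measure (EuclideanSpace ℝ (Fin n)))
    (σ : EuclideanSpace ℝ (Fin n) → Fin n → Fin n → ℝ)
    (x : EuclideanSpace ℝ (Fin n)) (ρ : ℝ)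
    (T : EuclideanSpace ℝ (Fin n) → EuclideanSpace ℝ (Fin n)) : Prop :=
  IntegrableOn T (sphere x ρ) (Hm n) ∧
  ∀ F : EuclideanSpace ℝ (Fin n) → Fin n → Fin n → ℝ,
    ContDiff ℝ (⊤ : ℕ∞) F → (∀ z, (∀ i j, F z i j = F z j i) ∧ (∑ i, F z i i = 0)) →
    ∫ z in ball x ρ, (∑ i, ∑ j, F z i j * σ z i j) ∂ν
      = -(∫ z in ball x ρ, (∑ i, u z i * (∑ j, pdsE j (fun y => F y i j) z)) ∂volume)
        + ∫ y in sphere x ρ,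
            (∑ i, ∑ j, edT n (fun l => (y l - x l) / ρ) (fun l => T y l) i j * F y i j)
              ∂(Hm n)

/-!
Each of `A`, `γ`, `s` at radius `r` is, up to its normalising constant, the boundary term
`∫_{∂B_r(x)} (ν ⊙ T) : Φ dH^{n-1}` of the Gauss–Green formula for a suitable symmetric trace-free
test field `Φ`, homogeneous of degree `-n` (for `A`, `γ`) or `-n-1` (for `s`) in `z - x` and
divergence-free away from `x`. Applying Gauss–Green on `B_τ(x)` and on `B_ρ(x)` to `Φ`, made smooth
near `x` by a cutoff that does not change it outside `B_ρ(x)`, and subtracting, the terms with `u`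
cancel because `div Φ = 0` on the annulus. What is left says that the difference of the two
boundary terms is `∫_{B_τ \ B_ρ} Φ : dℰ_d u`, and contracting `Φ` with the polar density of
`ℰ_d u` produces the kernels `Γ`, `Ξ`, `Υ`.
-/

noncomputable section

open scoped ContDiff

namespace NonlocalRepresentation

abbrev E (n : ℕ) := EuclideanSpace ℝ (Fin n)

variable {n : ℕ}

def sqDist (x z : E n) : ℝ := ∑ l, (z l - x l) ^ 2

lemma sqDist_nonneg (x z : E n) : 0 ≤ sqDist x z :=
  Finset.sum_nonneg fun _ _ => sq_nonneg _

lemma sqDist_eq_dist_sq (x z : E n) : sqDist x z = dist z x ^ 2 := by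
  rw [EuclideanSpace.dist_eq, Real.sq_sqrt (Finset.sum_nonneg fun _ _ => sq_nonneg _)]
  simp [sqDist, Real.dist_eq, sq_abs]

lemma sq_le_sqDist_of_mem_annulus {x z : E n} {ρ τ : ℝ} (hρ : 0 ≤ ρ)
    (hz : z ∈ ball x τ \ ball x ρ) : ρ ^ 2 ≤ sqDist x z := by
  rw [sqDist_eq_dist_sq]
  exact pow_le_pow_left₀ hρ (not_lt.1 fun h => hz.2 (mem_ball.2 h)) 2

lemma sqDist_pos_of_mem_annulus {x z : E n} {ρ τ : ℝ} (hρ : 0 < ρ)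
    (hz : z ∈ ball x τ \ ball x ρ) : 0 < sqDist x z :=
  lt_of_lt_of_le (pow_pos hρ 2) (sq_le_sqDist_of_mem_annulus hρ.le hz)

def invDistPow (x : E n) (m : ℕ) (z : E n) : ℝ := (Real.sqrt (sqDist x z) ^ m)⁻¹

lemma sqDist_mul_invDistPow_add_two (x : E n) (m : ℕ) {z : E n} (hq : 0 < sqDist x z) :
    sqDist x z * invDistPow x (m + 2) z = invDistPow x m z := by
  have hs : 0 < Real.sqrt (sqDist x z) := Real.sqrt_pos.2 hq
  rw [invDistPow, invDistPow, pow_add, Real.sq_sqrt hq.le]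
  field_simp

lemma invDistPow_of_sqDist_eq_zero (x : E n) {z : E n} (h : sqDist x z = 0) {m : ℕ}
    (hm : m ≠ 0) : invDistPow x m z = 0 := by
  rw [invDistPow, h, Real.sqrt_zero, zero_pow hm, inv_zero]

lemma invDistPow_of_dist_eq (x : E n) {y : E n} {r : ℝ} (hr : 0 ≤ r) (hy : dist y x = r)
    (m : ℕ) : invDistPow x m y = (r ^ m)⁻¹ := by
  rw [invDistPow, sqDist_eq_dist_sq, hy, Real.sqrt_sq hr]

section Fields

variable (x : E n)

def coordCLM (l : Fin n) : E n →L[ℝ] ℝ := EuclideanSpace.proj l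

lemma coordCLM_single (a j : Fin n) :
    coordCLM a (EuclideanSpace.single j 1) = if a = j then 1 else 0 := by
  simp [coordCLM]

lemma hasFDerivAt_coord_sub (l : Fin n) (z : E n) :
    HasFDerivAt (fun z : E n => z l - x l) (coordCLM l) z :=
  (coordCLM l).hasFDerivAt.sub_const (x l)

lemma contDiff_coord_sub (l : Fin n) : ContDiff ℝ ∞ (fun z : E n => z l - x l) :=
  (coordCLM l).contDiff.sub contDiff_const

lemma contDiff_sqDist : ContDiff ℝ ∞ (sqDist x) :=
  ContDiff.sum fun l _ => (contDiff_coord_sub x l).pow 2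

lemma hasFDerivAt_sqDist (z : E n) :
    HasFDerivAt (sqDist x) (∑ l, (2 * (z l - x l)) • coordCLM l) z := by
  refine HasFDerivAt.fun_sum fun l _ => ?_
  have h := (hasFDerivAt_coord_sub x l z).fun_mul (hasFDerivAt_coord_sub x l z)
  rw [two_mul, add_smul]
  simpa [pow_two] using h

lemma hasDerivAt_inv_sqrt_pow (m : ℕ) {t : ℝ} (ht : 0 < t) :
    HasDerivAt (fun t : ℝ => (Real.sqrt t ^ m)⁻¹)
      (-(m : ℝ) / 2 * (Real.sqrt t ^ (m + 2))⁻¹) t := by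
  have hs : 0 < Real.sqrt t := Real.sqrt_pos.2 ht
  have h : HasDerivAt (fun t : ℝ => Real.sqrt t ^ m)
      ((m : ℝ) * Real.sqrt t ^ (m - 1) * (1 / (2 * Real.sqrt t))) t :=
    (Real.hasDerivAt_sqrt ht.ne').pow m
  refine (h.fun_inv (pow_ne_zero m hs.ne')).congr_deriv ?_
  cases m with
  | zero => simp
  | succ k =>
    simp only [Nat.succ_sub_one]
    field_simp
    ring

lemma contDiffAt_invDistPow (m : ℕ) {z : E n} (hq : 0 < sqDist x z) :
    ContDiffAt ℝ ∞ (invDistPow x m) z :=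
  (((Real.contDiffAt_sqrt hq.ne').comp z (contDiff_sqDist x).contDiffAt).pow m).inv
    (pow_ne_zero m (Real.sqrt_pos.2 hq).ne')

lemma hasFDerivAt_mul_invDistPow {P : E n → ℝ} {P' : E n →L[ℝ] ℝ} {z : E n}
    (hP : HasFDerivAt P P' z) (m : ℕ) (hq : 0 < sqDist x z) :
    HasFDerivAt (fun y => P y * invDistPow x m y)
      (P z • ((-(m : ℝ) / 2 * invDistPow x (m + 2) z) • ∑ l, (2 * (z l - x l)) • coordCLM l)
        + invDistPow x m z • P') z :=
  hP.mul ((hasDerivAt_inv_sqrt_pow m hq).comp_hasFDerivAt z (hasFDerivAt_sqDist x z))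

lemma pdsE_eq_of_hasFDerivAt {f : E n → ℝ} {f' : E n →L[ℝ] ℝ} {z : E n}
    (hf : HasFDerivAt f f' z) (c : Fin n) : pdsE c f z = f' (EuclideanSpace.single c 1) := by
  rw [pdsE, hf.fderiv]

lemma sum_smul_coordCLM_single (v : Fin n → ℝ) (c : Fin n) :
    (∑ l, v l • coordCLM l) (EuclideanSpace.single c 1) = v c := by
  simp [coordCLM_single]

def rowDiv (F : E n → Fin n → Fin n → ℝ) (a : Fin n) (z : E n) : ℝ :=
  ∑ c, pdsE c (fun y => F y a c) z

/-! Test fields for `A`, `γ` and `s`: contracted with a symmetric `M` they give the `(i, j)` entry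
of `Γ(w)M / |w|ⁿ`, the scalar factor of `Ξ(w)M / |w|ⁿ` and the `k`-th entry of `Υ(w)M / |w|ⁿ⁺¹`,
where `w = z - x`. -/

def gammaField (i j : Fin n) (z : E n) (a c : Fin n) : ℝ :=
  (2⁻¹ * ((if i = a then (1 : ℝ) else 0) * ((z c - x c) * (z j - x j))
    + (if i = c then (1 : ℝ) else 0) * ((z a - x a) * (z j - x j))
    - (if j = a then (1 : ℝ) else 0) * ((z i - x i) * (z c - x c))
    - (if j = c then (1 : ℝ) else 0) * ((z i - x i) * (z a - x a)))) * invDistPow x (n + 2) z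

def xiField (z : E n) (a c : Fin n) : ℝ :=
  (z a - x a) * (z c - x c) * invDistPow x (n + 2) z
    - ((if a = c then (1 : ℝ) else 0) * (n : ℝ)⁻¹) * invDistPow x n z

def upsilonField (k : Fin n) (z : E n) (a c : Fin n) : ℝ :=
  ((if k = a then (1 : ℝ) else 0) * (z c - x c) + (if k = c then (1 : ℝ) else 0) * (z a - x a)
    + (if a = c then (1 : ℝ) else 0) * (z k - x k)) * invDistPow x (n + 2) z
  - (((n : ℝ) + 2) * ((z k - x k) * (z a - x a) * (z c - x c))) * invDistPow x (n + 4) z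

lemma pdsE_gammaField (i j : Fin n) {z : E n} (hq : 0 < sqDist x z) (a c : Fin n) :
    pdsE c (fun y => gammaField x i j y a c) z
      = -(((n : ℝ) + 2) / 2) * invDistPow x (n + 4) z
          * ((if i = a then (1 : ℝ) else 0) * (z j - x j)
            - (if j = a then (1 : ℝ) else 0) * (z i - x i)) * (z c - x c) ^ 2
        + (if i = c then (1 : ℝ) else 0)
          * (-(((n : ℝ) + 2) / 2) * invDistPow x (n + 4) z
              * ((z a - x a) * (z j - x j) * (z c - x c))
            + invDistPow x (n + 2) z / 2 * ((if j = c then (1 : ℝ) else 0) * (z a - x a)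
              + (if a = c then (1 : ℝ) else 0) * (z j - x j)
              - (if j = a then (1 : ℝ) else 0) * (z c - x c)))
        + (if j = c then (1 : ℝ) else 0)
          * ((((n : ℝ) + 2) / 2) * invDistPow x (n + 4) z
              * ((z i - x i) * (z a - x a) * (z c - x c))
            + invDistPow x (n + 2) z / 2 * ((if i = a then (1 : ℝ) else 0) * (z c - x c)
              - (if a = c then (1 : ℝ) else 0) * (z i - x i)
              - (if i = c then (1 : ℝ) else 0) * (z a - x a)))
        + invDistPow x (n + 2) z / 2 * ((if i = a then (1 : ℝ) else 0) * (z j - x j)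
            - (if j = a then (1 : ℝ) else 0) * (z i - x i)) := by
  have hw := hasFDerivAt_coord_sub x (z := z)
  have hP := ((((((hw c).mul (hw j)).const_mul (if i = a then (1 : ℝ) else 0)).add
    (((hw a).mul (hw j)).const_mul (if i = c then (1 : ℝ) else 0))).sub
    (((hw i).mul (hw c)).const_mul (if j = a then (1 : ℝ) else 0))).sub
    (((hw i).mul (hw a)).const_mul (if j = c then (1 : ℝ) else 0))).const_mul (2⁻¹ : ℝ)
  have hK : HasFDerivAt (fun y => gammaField x i j y a c) _ z :=
    hasFDerivAt_mul_invDistPow x hP (n + 2) hq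
  rw [pdsE_eq_of_hasFDerivAt hK]
  simp only [add_apply, sub_apply, smul_apply, smul_eq_mul, coordCLM_single,
    sum_smul_coordCLM_single, Pi.mul_apply, Pi.add_apply, Pi.sub_apply]
  push_cast
  ring

lemma rowDiv_gammaField (i j : Fin n) {z : E n} (hq : 0 < sqDist x z) (a : Fin n) :
    rowDiv (gammaField x i j) a z = 0 := by
  rw [rowDiv, Finset.sum_congr rfl fun c _ => pdsE_gammaField x i j hq a c]
  simp only [Finset.sum_add_distrib, ← Finset.mul_sum, Finset.sum_boole_mul, Finset.mem_univ,
    if_true, Finset.sum_const, Finset.card_univ, Fintype.card_fin, nsmul_eq_mul]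
  simp only [eq_comm (a := a), eq_comm (b := i)]
  have hq4 := sqDist_mul_invDistPow_add_two x (n + 2) hq
  rw [sqDist] at hq4
  linear_combination (-(((n : ℝ) + 2) / 2) * ((if i = a then (1 : ℝ) else 0) * (z j - x j)
    - (if j = a then (1 : ℝ) else 0) * (z i - x i))) * hq4

lemma pdsE_xiField {z : E n} (hq : 0 < sqDist x z) (a c : Fin n) :
    pdsE c (fun y => xiField x y a c) z
      = -((n : ℝ) + 2) * invDistPow x (n + 4) z * (z a - x a) * (z c - x c) ^ 2
        + (if a = c then (1 : ℝ) else 0) * (2 * invDistPow x (n + 2) z * (z c - x c))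
        + invDistPow x (n + 2) z * (z a - x a) := by
  have hK : HasFDerivAt (fun y => xiField x y a c) _ z :=
    (hasFDerivAt_mul_invDistPow x
      ((hasFDerivAt_coord_sub x a z).mul (hasFDerivAt_coord_sub x c z)) (n + 2) hq).sub
    (hasFDerivAt_mul_invDistPow x
      (hasFDerivAt_const ((if a = c then (1 : ℝ) else 0) * (n : ℝ)⁻¹) z) n hq)
  rw [pdsE_eq_of_hasFDerivAt hK]
  simp only [add_apply, sub_apply, smul_apply, smul_eq_mul, coordCLM_single,
    sum_smul_coordCLM_single, zero_apply, Pi.mul_apply]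
  push_cast
  have hn : (n : ℝ)⁻¹ * n = 1 := inv_mul_cancel₀ (Nat.cast_ne_zero.2 (Fin.pos a).ne')
  linear_combination ((if a = c then (1 : ℝ) else 0) * invDistPow x (n + 2) z * (z c - x c)) * hn

lemma rowDiv_xiField {z : E n} (hq : 0 < sqDist x z) (a : Fin n) : rowDiv (xiField x) a z = 0 := by
  rw [rowDiv, Finset.sum_congr rfl fun c _ => pdsE_xiField x hq a c]
  simp only [Finset.sum_add_distrib, ← Finset.mul_sum, Finset.sum_boole_mul, Finset.mem_univ,
    if_true, Finset.sum_const, Finset.card_univ, Fintype.card_fin, nsmul_eq_mul]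
  have hq4 := sqDist_mul_invDistPow_add_two x (n + 2) hq
  rw [sqDist] at hq4
  linear_combination (-((n : ℝ) + 2) * (z a - x a)) * hq4

lemma pdsE_upsilonField (k : Fin n) {z : E n} (hq : 0 < sqDist x z) (a c : Fin n) :
    pdsE c (fun y => upsilonField x k y a c) z
      = (-((n : ℝ) + 2) * invDistPow x (n + 4) z * (if k = a then (1 : ℝ) else 0)
          + ((n : ℝ) + 2) * ((n : ℝ) + 4) * invDistPow x (n + 6) z * (z k - x k) * (z a - x a))
          * (z c - x c) ^ 2
        + (if k = c then (1 : ℝ) else 0)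
          * (-2 * ((n : ℝ) + 2) * invDistPow x (n + 4) z * (z a - x a) * (z c - x c)
            + 2 * invDistPow x (n + 2) z * (if a = c then (1 : ℝ) else 0))
        + (if a = c then (1 : ℝ) else 0)
          * (-2 * ((n : ℝ) + 2) * invDistPow x (n + 4) z * (z k - x k) * (z c - x c))
        + (invDistPow x (n + 2) z * (if k = a then (1 : ℝ) else 0)
          - ((n : ℝ) + 2) * invDistPow x (n + 4) z * (z k - x k) * (z a - x a)) := by
  have hw := hasFDerivAt_coord_sub x (z := z)
  have hP := ((((hw c).const_mul (if k = a then (1 : ℝ) else 0)).add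
    ((hw a).const_mul (if k = c then (1 : ℝ) else 0))).add
    ((hw k).const_mul (if a = c then (1 : ℝ) else 0)))
  have hQ := (((hw k).mul (hw a)).mul (hw c)).const_mul ((n : ℝ) + 2)
  have hK : HasFDerivAt (fun y => upsilonField x k y a c) _ z :=
    (hasFDerivAt_mul_invDistPow x hP (n + 2) hq).sub (hasFDerivAt_mul_invDistPow x hQ (n + 4) hq)
  rw [pdsE_eq_of_hasFDerivAt hK]
  simp only [add_apply, sub_apply, smul_apply, smul_eq_mul, coordCLM_single,
    sum_smul_coordCLM_single, Pi.mul_apply, Pi.add_apply]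
  push_cast
  ring

lemma rowDiv_upsilonField (k : Fin n) {z : E n} (hq : 0 < sqDist x z) (a : Fin n) :
    rowDiv (upsilonField x k) a z = 0 := by
  rw [rowDiv, Finset.sum_congr rfl fun c _ => pdsE_upsilonField x k hq a c]
  simp only [Finset.sum_add_distrib, ← Finset.mul_sum, Finset.sum_boole_mul, Finset.mem_univ,
    if_true, Finset.sum_const, Finset.card_univ, Fintype.card_fin, nsmul_eq_mul]
  simp only [eq_comm (a := a)]
  have hq4 := sqDist_mul_invDistPow_add_two x (n + 2) hq
  have hq6 : sqDist x z * invDistPow x (n + 6) z = invDistPow x (n + 4) z :=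
    sqDist_mul_invDistPow_add_two x (n + 4) hq
  rw [sqDist] at hq4 hq6
  linear_combination (-((n : ℝ) + 2) * (if k = a then (1 : ℝ) else 0)) * hq4
    + (((n : ℝ) + 2) * ((n : ℝ) + 4) * ((z k - x k) * (z a - x a))) * hq6

lemma contDiffAt_gammaField (i j : Fin n) {z : E n} (hq : 0 < sqDist x z) (a c : Fin n) :
    ContDiffAt ℝ ∞ (fun y => gammaField x i j y a c) z := by
  have hw := contDiff_coord_sub x
  refine ContDiffAt.mul (contDiff_const.mul ?_).contDiffAt (contDiffAt_invDistPow x _ hq)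
  exact (((contDiff_const.mul ((hw c).mul (hw j))).add (contDiff_const.mul ((hw a).mul (hw j)))).sub
    (contDiff_const.mul ((hw i).mul (hw c)))).sub (contDiff_const.mul ((hw i).mul (hw a)))

lemma contDiffAt_xiField {z : E n} (hq : 0 < sqDist x z) (a c : Fin n) :
    ContDiffAt ℝ ∞ (fun y => xiField x y a c) z :=
  ((((contDiff_coord_sub x a).mul (contDiff_coord_sub x c)).contDiffAt).mul
    (contDiffAt_invDistPow x _ hq)).sub (contDiffAt_const.mul (contDiffAt_invDistPow x _ hq))

lemma contDiffAt_upsilonField (k : Fin n) {z : E n} (hq : 0 < sqDist x z) (a c : Fin n) :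
    ContDiffAt ℝ ∞ (fun y => upsilonField x k y a c) z := by
  have hw := contDiff_coord_sub x
  refine ContDiffAt.sub (ContDiffAt.mul ?_ (contDiffAt_invDistPow x _ hq))
    (ContDiffAt.mul ?_ (contDiffAt_invDistPow x _ hq))
  · exact (((contDiff_const.mul (hw c)).add (contDiff_const.mul (hw a))).add
      (contDiff_const.mul (hw k))).contDiffAt
  · exact (contDiff_const.mul (((hw k).mul (hw a)).mul (hw c))).contDiffAt

lemma gammaField_symm (i j : Fin n) (z : E n) (a c : Fin n) :
    gammaField x i j z a c = gammaField x i j z c a := by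
  simp only [gammaField]; ring

lemma xiField_symm (z : E n) (a c : Fin n) : xiField x z a c = xiField x z c a := by
  simp only [xiField, eq_comm (a := a)]; ring

lemma upsilonField_symm (k : Fin n) (z : E n) (a c : Fin n) :
    upsilonField x k z a c = upsilonField x k z c a := by
  simp only [upsilonField, eq_comm (a := a)]; ring

lemma trace_gammaField (i j : Fin n) (z : E n) : ∑ a, gammaField x i j z a a = 0 := by
  have h : ∀ a, gammaField x i j z a a
      = (if i = a then (1 : ℝ) else 0) * ((z a - x a) * (z j - x j) * invDistPow x (n + 2) z)
        - (if j = a then (1 : ℝ) else 0) * ((z i - x i) * (z a - x a) * invDistPow x (n + 2) z) :=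
    fun a => by simp only [gammaField]; ring
  simp only [h, Finset.sum_sub_distrib, Finset.sum_boole_mul, Finset.mem_univ, if_true]
  ring

lemma trace_xiField (z : E n) : ∑ a, xiField x z a a = 0 := by
  rcases Nat.eq_zero_or_pos n with rfl | hn
  · simp
  have h : ∀ a, xiField x z a a
      = (z a - x a) ^ 2 * invDistPow x (n + 2) z - (n : ℝ)⁻¹ * invDistPow x n z :=
    fun a => by simp only [xiField, if_true]; ring
  simp only [h, Finset.sum_sub_distrib, ← Finset.sum_mul, Finset.sum_const, Finset.card_univ,
    Fintype.card_fin, nsmul_eq_mul]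
  rcases (sqDist_nonneg x z).eq_or_lt with h0 | h0
  · rw [invDistPow_of_sqDist_eq_zero x h0.symm (by omega),
      invDistPow_of_sqDist_eq_zero x h0.symm (by omega)]
    ring
  · rw [← sqDist_mul_invDistPow_add_two x n h0]
    field_simp
    simp only [sqDist]
    ring

lemma trace_upsilonField (k : Fin n) (z : E n) : ∑ a, upsilonField x k z a a = 0 := by
  have h : ∀ a, upsilonField x k z a a
      = (if k = a then (1 : ℝ) else 0) * (2 * (z a - x a) * invDistPow x (n + 2) z)
        + (z k - x k) * invDistPow x (n + 2) z
        - (z a - x a) ^ 2 * (((n : ℝ) + 2) * (z k - x k) * invDistPow x (n + 4) z) :=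
    fun a => by simp only [upsilonField, if_true]; ring
  simp only [h, Finset.sum_sub_distrib, Finset.sum_add_distrib, Finset.sum_boole_mul,
    Finset.mem_univ, if_true, ← Finset.sum_mul, Finset.sum_const, Finset.card_univ, Fintype.card_fin, nsmul_eq_mul]
  rcases (sqDist_nonneg x z).eq_or_lt with h0 | h0
  · rw [invDistPow_of_sqDist_eq_zero x h0.symm (by omega)]
    simp only [sqDist] at h0
    rw [← h0]
    ring
  · have h4 := sqDist_mul_invDistPow_add_two x (n + 2) h0
    simp only [sqDist] at h4
    linear_combination (-((n : ℝ) + 2) * (z k - x k)) * h4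

lemma sum_sum_ite_left (i : Fin n) (f : Fin n → Fin n → ℝ) :
    ∑ a, ∑ c, (if i = a then (1 : ℝ) else 0) * f a c = ∑ c, f i c := by
  simp [ite_mul]

lemma sum_sum_ite_right (i : Fin n) (f : Fin n → Fin n → ℝ) :
    ∑ a, ∑ c, (if i = c then (1 : ℝ) else 0) * f a c = ∑ a, f a i := by
  simp [ite_mul]

lemma sum_sum_ite_diag (f : Fin n → Fin n → ℝ) :
    ∑ a, ∑ c, (if a = c then (1 : ℝ) else 0) * f a c = ∑ a, f a a := by
  simp [ite_mul]

lemma invDistPow_add_two {m : ℕ} {z : E n} (hq : 0 < sqDist x z) :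
    invDistPow x (m + 2) z = invDistPow x m z / sqDist x z := by
  rw [← sqDist_mul_invDistPow_add_two x m hq, mul_div_cancel_left₀ _ hq.ne']

lemma sum_sq_of_dist_eq {y : E n} {r : ℝ} (hy : dist y x = r) : ∑ a, (y a - x a) ^ 2 = r ^ 2 := by
  rw [← hy, ← sqDist_eq_dist_sq, sqDist]

lemma sum_gammaField_mul (i j : Fin n) {y : E n} (hq : 0 < sqDist x y) {M : Fin n → Fin n → ℝ}
    (hM : ∀ a c, M a c = M c a) :
    ∑ a, ∑ c, gammaField x i j y a c * M a c
      = (((∑ l, M i l * (y l - x l)) * (y j - x j)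
          - (y i - x i) * (∑ l, M j l * (y l - x l))) / (∑ l, (y l - x l) ^ 2))
        / (Real.sqrt (∑ l, (y l - x l) ^ 2)) ^ n := by
  have h : ∀ a c, gammaField x i j y a c * M a c
      = (if i = a then (1 : ℝ) else 0)
          * (invDistPow x (n + 2) y / 2 * (y j - x j) * (M a c * (y c - x c)))
        + (if i = c then (1 : ℝ) else 0)
          * (invDistPow x (n + 2) y / 2 * (y j - x j) * (M c a * (y a - x a)))
        - (if j = a then (1 : ℝ) else 0)
          * (invDistPow x (n + 2) y / 2 * (y i - x i) * (M a c * (y c - x c)))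
        - (if j = c then (1 : ℝ) else 0)
          * (invDistPow x (n + 2) y / 2 * (y i - x i) * (M c a * (y a - x a))) :=
    fun a c => by
      simp only [gammaField]
      linear_combination ((if i = c then (1 : ℝ) else 0) * (y j - x j)
        - (if j = c then (1 : ℝ) else 0) * (y i - x i))
          * (invDistPow x (n + 2) y / 2 * (y a - x a)) * hM a c
  simp only [h, Finset.sum_add_distrib, Finset.sum_sub_distrib, sum_sum_ite_left,
    sum_sum_ite_right]
  simp only [← Finset.mul_sum]
  rw [invDistPow_add_two x hq, invDistPow, sqDist]
  have hQ : 0 < ∑ l, (y l - x l) ^ 2 := hq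
  field_simp
  ring

lemma sum_mul_gammaField_of_dist_eq (i j : Fin n) {y : E n} {r : ℝ} (hr : 0 < r)
    (hy : dist y x = r) (t : E n) :
    ∑ a, ∑ c, (y a - x a) / r * t c * gammaField x i j y a c
      = 1 / (2 * r ^ n) * (t i * ((y j - x j) / r) - ((y i - x i) / r) * t j) := by
  have h : ∀ a c, (y a - x a) / r * t c * gammaField x i j y a c
      = (if i = a then (1 : ℝ) else 0)
          * (invDistPow x (n + 2) y / 2 * (y j - x j) * (y a - x a) * ((y c - x c) / r * t c))
        + (if i = c then (1 : ℝ) else 0)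
          * (invDistPow x (n + 2) y / (2 * r) * (y j - x j) * t c * (y a - x a) ^ 2)
        - (if j = a then (1 : ℝ) else 0)
          * (invDistPow x (n + 2) y / 2 * (y i - x i) * (y a - x a) * ((y c - x c) / r * t c))
        - (if j = c then (1 : ℝ) else 0)
          * (invDistPow x (n + 2) y / (2 * r) * (y i - x i) * t c * (y a - x a) ^ 2) :=
    fun a c => by simp only [gammaField]; ring
  simp only [h, Finset.sum_add_distrib, Finset.sum_sub_distrib, sum_sum_ite_left,
    sum_sum_ite_right]
  simp only [← Finset.mul_sum, sum_sq_of_dist_eq x hy, invDistPow_of_dist_eq x hr.le hy]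
  field_simp
  ring

lemma sum_xiField_mul {y : E n} (hq : 0 < sqDist x y) (M : Fin n → Fin n → ℝ) :
    ∑ a, ∑ c, xiField x y a c * M a c
      = ((∑ l, ∑ m, (y l - x l) * M l m * (y m - x m)) / (∑ l, (y l - x l) ^ 2)
          - (∑ l, M l l) / (n : ℝ)) / (Real.sqrt (∑ l, (y l - x l) ^ 2)) ^ n := by
  have h : ∀ a c, xiField x y a c * M a c
      = invDistPow x (n + 2) y * ((y a - x a) * M a c * (y c - x c))
        - (if a = c then (1 : ℝ) else 0) * (invDistPow x n y / n * M a c) :=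
    fun a c => by simp only [xiField]; ring
  simp only [h, Finset.sum_sub_distrib, sum_sum_ite_diag]
  simp only [← Finset.mul_sum]
  rw [invDistPow_add_two x hq, invDistPow, sqDist]
  have hQ : 0 < ∑ l, (y l - x l) ^ 2 := hq
  field_simp

lemma sum_mul_xiField_of_dist_eq {y : E n} {r : ℝ} (hr : 0 < r) (hy : dist y x = r) (t : E n) :
    ∑ a, ∑ c, (y a - x a) / r * t c * xiField x y a c
      = ((n : ℝ) - 1) / n * (1 / r ^ n) * ∑ l, t l * ((y l - x l) / r) := by
  have h : ∀ a c, (y a - x a) / r * t c * xiField x y a c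
      = invDistPow x (n + 2) y * (y a - x a) ^ 2 * (t c * ((y c - x c) / r))
        - (if a = c then (1 : ℝ) else 0) * (invDistPow x n y / n * (t c * ((y a - x a) / r))) :=
    fun a c => by simp only [xiField]; ring
  simp only [h, Finset.sum_sub_distrib, sum_sum_ite_diag]
  simp only [← Finset.mul_sum, ← Finset.sum_mul, sum_sq_of_dist_eq x hy,
    invDistPow_of_dist_eq x hr.le hy]
  rcases Nat.eq_zero_or_pos n with rfl | hn
  · simp
  field_simp
  ring

lemma sum_upsilonField_mul (k : Fin n) {y : E n} (hq : 0 < sqDist x y)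
    {M : Fin n → Fin n → ℝ} (hM : ∀ a c, M a c = M c a) :
    ∑ a, ∑ c, upsilonField x k y a c * M a c
      = (2 * (∑ l, M k l * (y l - x l)) / Real.sqrt (∑ l, (y l - x l) ^ 2)
          - ((n : ℝ) + 2) * ((∑ l, ∑ m, (y l - x l) * M l m * (y m - x m))
              / (∑ l, (y l - x l) ^ 2)) * ((y k - x k) / Real.sqrt (∑ l, (y l - x l) ^ 2))
          + (∑ l, M l l) * ((y k - x k) / Real.sqrt (∑ l, (y l - x l) ^ 2)))
        / (Real.sqrt (∑ l, (y l - x l) ^ 2)) ^ (n + 1) := by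
  have h : ∀ a c, upsilonField x k y a c * M a c
      = (if k = a then (1 : ℝ) else 0) * (invDistPow x (n + 2) y * (M a c * (y c - x c)))
        + (if k = c then (1 : ℝ) else 0) * (invDistPow x (n + 2) y * (M c a * (y a - x a)))
        + (if a = c then (1 : ℝ) else 0) * (invDistPow x (n + 2) y * (y k - x k) * M a c)
        - ((n : ℝ) + 2) * invDistPow x (n + 4) y * (y k - x k)
          * ((y a - x a) * M a c * (y c - x c)) :=
    fun a c => by
      simp only [upsilonField]
      linear_combination (if k = c then (1 : ℝ) else 0) * invDistPow x (n + 2) y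
        * (y a - x a) * hM a c
  simp only [h, Finset.sum_add_distrib, Finset.sum_sub_distrib, sum_sum_ite_left,
    sum_sum_ite_right, sum_sum_ite_diag]
  simp only [← Finset.mul_sum]
  rw [invDistPow_add_two x (m := n + 2) hq, invDistPow_add_two x hq, invDistPow, sqDist]
  obtain ⟨s, hs, hQ⟩ : ∃ s, 0 < s ∧ ∑ l, (y l - x l) ^ 2 = s ^ 2 :=
    ⟨_, Real.sqrt_pos.2 hq, (Real.sq_sqrt hq.le).symm⟩
  rw [hQ, Real.sqrt_sq hs.le]
  field_simp
  ring

lemma sum_mul_upsilonField_of_dist_eq (k : Fin n) {y : E n} {r : ℝ} (hr : 0 < r)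
    (hy : dist y x = r) (t : E n) :
    ∑ a, ∑ c, (y a - x a) / r * t c * upsilonField x k y a c
      = 1 / r ^ (n + 1) * (t k - n * (∑ l, (y l - x l) / r * t l) * ((y k - x k) / r)) := by
  have h : ∀ a c, (y a - x a) / r * t c * upsilonField x k y a c
      = (if k = a then (1 : ℝ) else 0)
          * (invDistPow x (n + 2) y * (y a - x a) * ((y c - x c) / r * t c))
        + (if k = c then (1 : ℝ) else 0) * (invDistPow x (n + 2) y / r * t c * (y a - x a) ^ 2)
        + (if a = c then (1 : ℝ) else 0)
          * (invDistPow x (n + 2) y * (y k - x k) * ((y a - x a) / r * t c))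
        - ((n : ℝ) + 2) * invDistPow x (n + 4) y * (y k - x k) * (y a - x a) ^ 2
          * ((y c - x c) / r * t c) :=
    fun a c => by simp only [upsilonField]; ring
  simp only [h, Finset.sum_add_distrib, Finset.sum_sub_distrib, sum_sum_ite_left,
    sum_sum_ite_right, sum_sum_ite_diag]
  simp only [← Finset.mul_sum, ← Finset.sum_mul, sum_sq_of_dist_eq x hy,
    invDistPow_of_dist_eq x hr.le hy]
  field_simp
  ring

end Fields

def cutoff (ρ t : ℝ) : ℝ := Real.smoothTransition ((t - ρ ^ 2 / 4) / (ρ ^ 2 / 4))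

lemma cutoff_eq_one {ρ t : ℝ} (hρ : 0 < ρ) (ht : ρ ^ 2 / 2 ≤ t) : cutoff ρ t = 1 := by
  apply Real.smoothTransition.one_of_one_le
  rw [le_div_iff₀ (by positivity)]
  linarith

lemma cutoff_eq_zero {ρ t : ℝ} (ht : t ≤ ρ ^ 2 / 4) : cutoff ρ t = 0 :=
  Real.smoothTransition.zero_of_nonpos
    (div_nonpos_of_nonpos_of_nonneg (by linarith) (by positivity))

section CutoffField

variable (x : E n) (ρ : ℝ) (K : E n → Fin n → Fin n → ℝ)

def cutoffField (z : E n) (a c : Fin n) : ℝ := cutoff ρ (sqDist x z) * K z a c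

variable {x ρ K}

lemma contDiff_cutoffField (hρ : 0 < ρ)
    (hK : ∀ z, 0 < sqDist x z → ∀ a c, ContDiffAt ℝ ∞ (fun y => K y a c) z) :
    ContDiff ℝ ∞ (cutoffField x ρ K) := by
  refine contDiff_pi.2 fun a => contDiff_pi.2 fun c => contDiff_iff_contDiffAt.2 fun z => ?_
  rcases lt_or_ge (sqDist x z) (ρ ^ 2 / 4) with h | h
  · refine (contDiffAt_const (c := (0 : ℝ))).congr_of_eventuallyEq ?_
    filter_upwards [(isOpen_lt (contDiff_sqDist x).continuous continuous_const).mem_nhds h]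
      with y hy
    simp [cutoffField, cutoff_eq_zero (le_of_lt hy)]
  · have hcut : ContDiff ℝ ∞ (fun z => cutoff ρ (sqDist x z)) :=
      Real.smoothTransition.contDiff.comp (((contDiff_sqDist x).sub contDiff_const).div_const _)
    exact hcut.contDiffAt.mul (hK z (lt_of_lt_of_le (by positivity) h) a c)

lemma cutoffField_eq (hρ : 0 < ρ) {z : E n} (h : ρ ^ 2 / 2 ≤ sqDist x z) :
    cutoffField x ρ K z = K z := by
  ext a c
  rw [cutoffField, cutoff_eq_one hρ h, one_mul]

lemma rowDiv_cutoffField (hρ : 0 < ρ) {z : E n} (h : ρ ^ 2 / 2 < sqDist x z) (a : Fin n) :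
    rowDiv (cutoffField x ρ K) a z = rowDiv K a z := by
  refine Finset.sum_congr rfl fun c _ => ?_
  have hev : (fun y => cutoffField x ρ K y a c) =ᶠ[𝓝 z] fun y => K y a c := by
    filter_upwards [(isOpen_lt continuous_const (contDiff_sqDist x).continuous).mem_nhds h]
      with y hy
    rw [cutoffField_eq hρ hy.le]
  rw [pdsE, pdsE, hev.fderiv_eq]

end CutoffField

lemma continuous_rowDiv {F : E n → Fin n → Fin n → ℝ} (hF : ContDiff ℝ ∞ F) (a : Fin n) :
    Continuous (rowDiv F a) := by
  refine continuous_finsetSum _ fun c _ => ?_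
  have hFac : ContDiff ℝ ∞ fun y => F y a c := contDiff_pi.1 (contDiff_pi.1 hF a) c
  exact (hFac.continuous_fderiv (by simp)).clm_apply continuous_const

lemma abs_le_one_of_sum_sq_eq_one {M : Fin n → Fin n → ℝ} (hM : ∑ a, ∑ c, M a c ^ 2 = 1)
    (a c : Fin n) : |M a c| ≤ 1 := by
  rw [← abs_one, ← sq_le_sq, one_pow, ← hM]
  calc M a c ^ 2 ≤ ∑ l, M a l ^ 2 :=
        Finset.single_le_sum (f := fun l => M a l ^ 2) (fun _ _ => sq_nonneg _) (Finset.mem_univ c)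
    _ ≤ ∑ l, ∑ m, M l m ^ 2 :=
        Finset.single_le_sum (f := fun l => ∑ m, M l m ^ 2)
          (fun _ _ => Finset.sum_nonneg fun _ _ => sq_nonneg _) (Finset.mem_univ a)

def sphereFlux (x : E n) (r : ℝ) (T : E n → E n) (F : E n → Fin n → Fin n → ℝ) : ℝ :=
  ∫ y in sphere x r,
    (∑ i, ∑ j, edT n (fun l => (y l - x l) / r) (fun l => T y l) i j * F y i j) ∂(Hm n)

lemma sum_edT_mul_of_symm {v b : Fin n → ℝ} {M : Fin n → Fin n → ℝ}
    (hsym : ∀ a c, M a c = M c a) (htr : ∑ a, M a a = 0) :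
    ∑ a, ∑ c, edT n v b a c * M a c = ∑ a, ∑ c, v a * b c * M a c := by
  have hswap : ∑ a, ∑ c, v c * b a * M a c = ∑ a, ∑ c, v a * b c * M a c := by
    rw [Finset.sum_comm]
    simp only [hsym]
  have hdiag : ∑ a, ∑ c, (if a = c then (1 : ℝ) else 0) * M a c = 0 := by
    simpa using htr
  have h : ∀ a c, edT n v b a c * M a c = (v a * b c * M a c + v c * b a * M a c) / 2
      - (∑ l, v l * b l) / n * ((if a = c then (1 : ℝ) else 0) * M a c) :=
    fun a c => by simp only [edT]; ring
  simp only [h, Finset.sum_sub_distrib, ← Finset.sum_div, Finset.sum_add_distrib, ← Finset.mul_sum,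
    hswap, hdiag]
  ring

section GaussGreen

variable {u : E n → E n} {ν : Measure (E n)} [IsFiniteMeasure ν] {σ : E n → Fin n → Fin n → ℝ}
  {x : E n} {ρ τ : ℝ} {Tρ Tτ : E n → E n} {F K : E n → Fin n → Fin n → ℝ}

lemma integrableOn_ball_sum_mul_density (hσmeas : Measurable σ) {C : ℝ}
    (hσbd : ∀ᵐ y ∂ν, ∀ a c, |σ y a c| ≤ C) (hF : Continuous F) (r : ℝ) :
    IntegrableOn (fun z => ∑ a, ∑ c, F z a c * σ z a c) (ball x r) ν := by
  refine integrable_finsetSum _ fun a _ => integrable_finsetSum _ fun c _ => ?_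
  have hσac : Integrable (fun y => σ y a c) ν :=
    .of_bound ((measurable_pi_apply c).comp
      ((measurable_pi_apply a).comp hσmeas)).aestronglyMeasurable C (hσbd.mono fun y h => h a c)
  exact IntegrableOn.continuousOn_mul_of_subset (by fun_prop) hσac.integrableOn
    (isCompact_closedBall x r) measurableSet_ball ball_subset_closedBall

lemma integrableOn_ball_sum_mul_rowDiv (hu : Integrable u volume) (hF : ContDiff ℝ ∞ F) (r : ℝ) :
    IntegrableOn (fun z => ∑ a, u z a * rowDiv F a z) (ball x r) volume := by
  refine integrable_finsetSum _ fun a _ => ?_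
  exact IntegrableOn.mul_continuousOn_of_subset
    ((EuclideanSpace.proj a : E n →L[ℝ] ℝ).integrable_comp hu).integrableOn
    (continuous_rowDiv hF a).continuousOn measurableSet_ball (isCompact_closedBall x r)
    ball_subset_closedBall

lemma integral_annulus_eq_sphereFlux_sub (hu : Integrable u volume) (hσmeas : Measurable σ)
    {C : ℝ} (hσbd : ∀ᵐ y ∂ν, ∀ a c, |σ y a c| ≤ C) (hρτ : ρ ≤ τ)
    (hTρ : IsSphereTrace u ν σ x ρ Tρ) (hTτ : IsSphereTrace u ν σ x τ Tτ)
    (hF : ContDiff ℝ ∞ F) (hsym : ∀ z, (∀ a c, F z a c = F z c a) ∧ ∑ a, F z a a = 0)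
    (hdiv : ∀ z ∈ ball x τ \ ball x ρ, ∀ a, rowDiv F a z = 0) :
    ∫ z in ball x τ \ ball x ρ, (∑ a, ∑ c, F z a c * σ z a c) ∂ν
      = sphereFlux x τ Tτ F - sphereFlux x ρ Tρ F := by
  have hsub : ball x ρ ⊆ ball x τ := ball_subset_ball hρτ
  have hu_annulus : ∫ z in ball x τ \ ball x ρ, (∑ a, u z a * rowDiv F a z) = 0 :=
    setIntegral_eq_zero_of_forall_eq_zero fun z hz => by simp [hdiv z hz]
  rw [setIntegral_sdiff measurableSet_ball (integrableOn_ball_sum_mul_rowDiv hu hF τ) hsub]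
    at hu_annulus
  rw [setIntegral_sdiff measurableSet_ball
      (integrableOn_ball_sum_mul_density hσmeas hσbd hF.continuous τ) hsub,
    hTτ.2 F hF hsym, hTρ.2 F hF hsym, sphereFlux, sphereFlux]
  simp only [rowDiv] at hu_annulus
  linarith

theorem integral_annulus_eq_sphere_sub (hu : Integrable u volume) (hσmeas : Measurable σ)
    {C : ℝ} (hσbd : ∀ᵐ y ∂ν, ∀ a c, |σ y a c| ≤ C) (hρ : 0 < ρ) (hρτ : ρ ≤ τ)
    (hTρ : IsSphereTrace u ν σ x ρ Tρ) (hTτ : IsSphereTrace u ν σ x τ Tτ)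
    (hK : ∀ z, 0 < sqDist x z → ∀ a c, ContDiffAt ℝ ∞ (fun y => K y a c) z)
    (hsym : ∀ z a c, K z a c = K z c a) (htr : ∀ z, ∑ a, K z a a = 0)
    (hdiv : ∀ z, 0 < sqDist x z → ∀ a, rowDiv K a z = 0) :
    ∫ z in ball x τ \ ball x ρ, (∑ a, ∑ c, K z a c * σ z a c) ∂ν
      = ∫ y in sphere x τ, (∑ a, ∑ c, (y a - x a) / τ * Tτ y c * K y a c) ∂(Hm n)
        - ∫ y in sphere x ρ, (∑ a, ∑ c, (y a - x a) / ρ * Tρ y c * K y a c) ∂(Hm n) := by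
  have hfar : ∀ z, ρ ^ 2 ≤ sqDist x z → ρ ^ 2 / 2 < sqDist x z := fun z h => by
    have := pow_pos hρ 2
    linarith
  have hflux : ∀ r T, ρ ≤ r → sphereFlux x r T (cutoffField x ρ K)
      = ∫ y in sphere x r, (∑ a, ∑ c, (y a - x a) / r * T y c * K y a c) ∂(Hm n) := by
    refine fun r T hr => setIntegral_congr_fun isClosed_sphere.measurableSet fun y hy => ?_
    have hy : ρ ^ 2 ≤ sqDist x y := by
      rw [sqDist_eq_dist_sq, mem_sphere.1 hy]
      exact pow_le_pow_left₀ hρ.le hr 2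
    simp only [cutoffField_eq hρ (hfar y hy).le, sum_edT_mul_of_symm (hsym y) (htr y)]
  have hcut := integral_annulus_eq_sphereFlux_sub hu hσmeas hσbd hρτ hTρ hTτ
    (contDiff_cutoffField hρ hK)
    (fun z => ⟨fun a c => by simp only [cutoffField, hsym z a c],
      by simp only [cutoffField, ← Finset.mul_sum, htr, mul_zero]⟩)
    (fun z hmem a => by
      have hz := hfar z (sq_le_sqDist_of_mem_annulus hρ.le hmem)
      rw [rowDiv_cutoffField hρ hz, hdiv z (sqDist_pos_of_mem_annulus hρ hmem) a])
  rw [← hflux τ Tτ hρτ, ← hflux ρ Tρ le_rfl, ← hcut]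
  refine setIntegral_congr_fun (measurableSet_ball.diff measurableSet_ball) fun z hz => ?_
  simp only [cutoffField_eq hρ (hfar z (sq_le_sqDist_of_mem_annulus hρ.le hz)).le]

lemma integral_sphere_eq_const_mul {r c : ℝ} {f g : E n → ℝ}
    (h : ∀ y, dist y x = r → f y = c * g y) :
    ∫ y in sphere x r, f y ∂(Hm n) = c * ∫ y in sphere x r, g y ∂(Hm n) := by
  rw [setIntegral_congr_fun isClosed_sphere.measurableSet fun y hy => h y (mem_sphere.1 hy),
    integral_const_mul]

theorem ABall_sub_ABall (hu : Integrable u volume) (hσmeas : Measurable σ)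
    (hσsym : ∀ᵐ y ∂ν, ∀ a c, σ y a c = σ y c a) {C : ℝ} (hσbd : ∀ᵐ y ∂ν, ∀ a c, |σ y a c| ≤ C)
    (hρ : 0 < ρ) (hρτ : ρ ≤ τ) (hTρ : IsSphereTrace u ν σ x ρ Tρ)
    (hTτ : IsSphereTrace u ν σ x τ Tτ) (i j : Fin n) :
    ABall x τ Tτ i j - ABall x ρ Tρ i j = 1 / omegaN n *
      ∫ y in ball x τ \ ball x ρ,
        (((∑ l, σ y i l * (y l - x l)) * (y j - x j)
            - (y i - x i) * (∑ l, σ y j l * (y l - x l))) / (∑ l, (y l - x l) ^ 2))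
          / (Real.sqrt (∑ l, (y l - x l) ^ 2)) ^ n ∂ν := by
  have h := integral_annulus_eq_sphere_sub hu hσmeas hσbd hρ hρτ hTρ hTτ
    (fun _ => contDiffAt_gammaField x i j) (gammaField_symm x i j) (trace_gammaField x i j)
    (fun _ => rowDiv_gammaField x i j)
  rw [setIntegral_congr_ae (measurableSet_ball.diff measurableSet_ball)
      (hσsym.mono fun y hy hmem => sum_gammaField_mul x i j (sqDist_pos_of_mem_annulus hρ hmem) hy),
    integral_sphere_eq_const_mul fun y hy =>
      sum_mul_gammaField_of_dist_eq x i j (hρ.trans_le hρτ) hy (Tτ y),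
    integral_sphere_eq_const_mul fun y hy => sum_mul_gammaField_of_dist_eq x i j hρ hy (Tρ y)] at h
  rw [ABall, ABall, h]
  ring

theorem gBall_sub_gBall (hn : 2 ≤ n) (hu : Integrable u volume) (hσmeas : Measurable σ)
    {C : ℝ} (hσbd : ∀ᵐ y ∂ν, ∀ a c, |σ y a c| ≤ C)
    (hρ : 0 < ρ) (hρτ : ρ ≤ τ) (hTρ : IsSphereTrace u ν σ x ρ Tρ)
    (hTτ : IsSphereTrace u ν σ x τ Tτ) :
    gBall x τ Tτ - gBall x ρ Tρ = 1 / (((n : ℝ) - 1) * omegaN n) *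
      ∫ y in ball x τ \ ball x ρ,
        ((∑ l, ∑ m, (y l - x l) * σ y l m * (y m - x m)) / (∑ l, (y l - x l) ^ 2)
            - (∑ l, σ y l l) / (n : ℝ)) / (Real.sqrt (∑ l, (y l - x l) ^ 2)) ^ n ∂ν := by
  have h := integral_annulus_eq_sphere_sub hu hσmeas hσbd hρ hρτ hTρ hTτ
    (fun _ => contDiffAt_xiField x) (xiField_symm x) (trace_xiField x) (fun _ => rowDiv_xiField x)
  rw [setIntegral_congr_fun (measurableSet_ball.diff measurableSet_ball)
      fun y hmem => sum_xiField_mul x (sqDist_pos_of_mem_annulus hρ hmem) (σ y),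
    integral_sphere_eq_const_mul fun y hy =>
      sum_mul_xiField_of_dist_eq x (hρ.trans_le hρτ) hy (Tτ y),
    integral_sphere_eq_const_mul fun y hy => sum_mul_xiField_of_dist_eq x hρ hy (Tρ y)] at h
  have hn1 : (n : ℝ) - 1 ≠ 0 := by
    have : (2 : ℝ) ≤ n := by exact_mod_cast hn
    linarith
  rw [gBall, gBall, h]
  field_simp

theorem sBall_sub_sBall (hu : Integrable u volume) (hσmeas : Measurable σ)
    (hσsym : ∀ᵐ y ∂ν, ∀ a c, σ y a c = σ y c a) {C : ℝ} (hσbd : ∀ᵐ y ∂ν, ∀ a c, |σ y a c| ≤ C)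
    (hρ : 0 < ρ) (hρτ : ρ ≤ τ) (hTρ : IsSphereTrace u ν σ x ρ Tρ)
    (hTτ : IsSphereTrace u ν σ x τ Tτ) (k : Fin n) :
    sBall x τ Tτ k - sBall x ρ Tρ k = 1 / (((n : ℝ) - 1) * omegaN n) *
      ∫ y in ball x τ \ ball x ρ,
        (2 * (∑ l, σ y k l * (y l - x l)) / Real.sqrt (∑ l, (y l - x l) ^ 2)
          - ((n : ℝ) + 2) *
              ((∑ l, ∑ m, (y l - x l) * σ y l m * (y m - x m)) / (∑ l, (y l - x l) ^ 2))
              * ((y k - x k) / Real.sqrt (∑ l, (y l - x l) ^ 2))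
          + (∑ l, σ y l l) * ((y k - x k) / Real.sqrt (∑ l, (y l - x l) ^ 2)))
          / (Real.sqrt (∑ l, (y l - x l) ^ 2)) ^ (n + 1) ∂ν := by
  have h := integral_annulus_eq_sphere_sub hu hσmeas hσbd hρ hρτ hTρ hTτ
    (fun _ => contDiffAt_upsilonField x k) (upsilonField_symm x k) (trace_upsilonField x k)
    (fun _ => rowDiv_upsilonField x k)
  rw [setIntegral_congr_ae (measurableSet_ball.diff measurableSet_ball)
      (hσsym.mono fun y hy hmem =>
        sum_upsilonField_mul x k (sqDist_pos_of_mem_annulus hρ hmem) hy),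
    integral_sphere_eq_const_mul fun y hy =>
      sum_mul_upsilonField_of_dist_eq x k (hρ.trans_le hρτ) hy (Tτ y),
    integral_sphere_eq_const_mul fun y hy => sum_mul_upsilonField_of_dist_eq x k hρ hy (Tρ y)] at h
  rw [sBall, sBall, h]
  generalize ((n : ℝ) - 1) * omegaN n = c
  ring

end GaussGreen

end NonlocalRepresentation

end

open NonlocalRepresentation

theorem nonlocal_representation_general {n : ℕ} (hn : 3 ≤ n)
    (u : EuclideanSpace ℝ (Fin n) → EuclideanSpace ℝ (Fin n))
    (hu : Integrable u volume)
    (ν : Measure (EuclideanSpace ℝ (Fin n))) (hνfin : IsFiniteMeasure ν)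
    (σ : EuclideanSpace ℝ (Fin n) → Fin n → Fin n → ℝ) (hσmeas : Measurable σ)
    (hσpolar : ∀ᵐ x ∂ν, (∀ i j, σ x i j = σ x j i) ∧ (∑ i, σ x i i = 0) ∧
      (∑ i, ∑ j, (σ x i j) ^ 2 = 1))
    (x : EuclideanSpace ℝ (Fin n)) (τ ρ : ℝ) (hρ : 0 < ρ) (hρτ : ρ < τ)
    (Tρ Tτ : EuclideanSpace ℝ (Fin n) → EuclideanSpace ℝ (Fin n))
    (hTρ : IsSphereTrace u ν σ x ρ Tρ) (hTτ : IsSphereTrace u ν σ x τ Tτ) :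
    (∀ i j, ABall x ρ Tρ i j =
      -(1 / omegaN n) *
        (∫ y in ball x τ \ ball x ρ,
          (((∑ l, σ y i l * (y l - x l)) * (y j - x j)
              - (y i - x i) * (∑ l, σ y j l * (y l - x l))) / (∑ l, (y l - x l) ^ 2))
            / (Real.sqrt (∑ l, (y l - x l) ^ 2)) ^ n ∂ν)
      + ABall x τ Tτ i j) ∧
    (∀ i j : Fin n, gBall x ρ Tρ * (if i = j then (1 : ℝ) else 0) =
      -(1 / (((n : ℝ) - 1) * omegaN n)) *
        (∫ y in ball x τ \ ball x ρ,
          (((∑ l, ∑ m, (y l - x l) * σ y l m * (y m - x m)) / (∑ l, (y l - x l) ^ 2)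
              - (∑ l, σ y l l) / (n : ℝ)) * (if i = j then (1 : ℝ) else 0))
            / (Real.sqrt (∑ l, (y l - x l) ^ 2)) ^ n ∂ν)
      + gBall x τ Tτ * (if i = j then (1 : ℝ) else 0)) ∧
    (∀ k, sBall x ρ Tρ k =
      -(1 / (((n : ℝ) - 1) * omegaN n)) *
        (∫ y in ball x τ \ ball x ρ,
          (2 * (∑ l, σ y k l * (y l - x l)) / Real.sqrt (∑ l, (y l - x l) ^ 2)
            - ((n : ℝ) + 2) *
                ((∑ l, ∑ m, (y l - x l) * σ y l m * (y m - x m)) / (∑ l, (y l - x l) ^ 2))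
                * ((y k - x k) / Real.sqrt (∑ l, (y l - x l) ^ 2))
            + (∑ l, σ y l l) * ((y k - x k) / Real.sqrt (∑ l, (y l - x l) ^ 2)))
            / (Real.sqrt (∑ l, (y l - x l) ^ 2)) ^ (n + 1) ∂ν)
      + sBall x τ Tτ k) := by
  have hσsym : ∀ᵐ y ∂ν, ∀ a c, σ y a c = σ y c a := hσpolar.mono fun _ h => h.1
  have hσbd : ∀ᵐ y ∂ν, ∀ a c, |σ y a c| ≤ 1 :=
    hσpolar.mono fun _ h => abs_le_one_of_sum_sq_eq_one h.2.2
  refine ⟨fun i j => ?_, fun i j => ?_, fun k => ?_⟩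
  · linear_combination -ABall_sub_ABall hu hσmeas hσsym hσbd hρ hρτ.le hTρ hTτ i j
  · simp only [mul_div_right_comm _ (if i = j then (1 : ℝ) else 0), integral_mul_const]
    linear_combination (-(if i = j then (1 : ℝ) else 0)) *
      gBall_sub_gBall (by omega) hu hσmeas hσbd hρ hρτ.le hTρ hTτ
  · linear_combination -sBall_sub_sBall hu hσmeas hσsym hσbd hρ hρτ.le hTρ hTτ k

/-- non-local representation of the projection ingredients:
for `u ∈ BD_dev(ℝⁿ)` (with `ℰ_d u = σ·ν`, `ν = |ℰ_d u|`), every `x`, `0 < ρ < τ`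
and boundary traces on the two spheres, the operators `A_{ρ,x}`, `γ_{ρ,x}`, `s_{ρ,x}`
are obtained from the corresponding operators at radius `τ` plus the integral over
the annulus of the zero-homogeneous kernels `Γ`, `Ξ`, `Υ` against `ℰ_d u`. -/
theorem nonlocal_representation {n : ℕ} (hn : 3 ≤ n)
    (u : EuclideanSpace ℝ (Fin n) → EuclideanSpace ℝ (Fin n))
    (hu : Integrable u volume)
    (ν : Measure (EuclideanSpace ℝ (Fin n))) (hνfin : IsFiniteMeasure ν)
    (σ : EuclideanSpace ℝ (Fin n) → Fin n → Fin n → ℝ) (hσmeas : Measurable σ)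
    (hσpolar : ∀ᵐ x ∂ν, (∀ i j, σ x i j = σ x j i) ∧ (∑ i, σ x i i = 0) ∧
      (∑ i, ∑ j, (σ x i j) ^ 2 = 1))
    (hGG : ∀ φ : EuclideanSpace ℝ (Fin n) → Fin n → Fin n → ℝ,
      ContDiff ℝ (⊤ : ℕ∞) φ → HasCompactSupport φ →
      (∀ x, (∀ i j, φ x i j = φ x j i) ∧ (∑ i, φ x i i = 0)) →
      ∫ x, (∑ i, ∑ j, φ x i j * σ x i j) ∂ν
        = ∫ x, (∑ i, (∑ j, pdsE j (fun y => φ y i j) x) * u x i) ∂volume)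
    (x : EuclideanSpace ℝ (Fin n)) (τ ρ : ℝ) (hρ : 0 < ρ) (hρτ : ρ < τ)
    (Tρ Tτ : EuclideanSpace ℝ (Fin n) → EuclideanSpace ℝ (Fin n))
    (hTρ : IsSphereTrace u ν σ x ρ Tρ) (hTτ : IsSphereTrace u ν σ x τ Tτ) :
    (∀ i j, ABall x ρ Tρ i j =
      -(1 / omegaN n) *
        (∫ y in ball x τ \ ball x ρ,
          (((∑ l, σ y i l * (y l - x l)) * (y j - x j)
              - (y i - x i) * (∑ l, σ y j l * (y l - x l))) / (∑ l, (y l - x l) ^ 2))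
            / (Real.sqrt (∑ l, (y l - x l) ^ 2)) ^ n ∂ν)
      + ABall x τ Tτ i j) ∧
    (∀ i j : Fin n, gBall x ρ Tρ * (if i = j then (1 : ℝ) else 0) =
      -(1 / (((n : ℝ) - 1) * omegaN n)) *
        (∫ y in ball x τ \ ball x ρ,
          (((∑ l, ∑ m, (y l - x l) * σ y l m * (y m - x m)) / (∑ l, (y l - x l) ^ 2)
              - (∑ l, σ y l l) / (n : ℝ)) * (if i = j then (1 : ℝ) else 0))
            / (Real.sqrt (∑ l, (y l - x l) ^ 2)) ^ n ∂ν)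
      + gBall x τ Tτ * (if i = j then (1 : ℝ) else 0)) ∧
    (∀ k, sBall x ρ Tρ k =
      -(1 / (((n : ℝ) - 1) * omegaN n)) *
        (∫ y in ball x τ \ ball x ρ,
          (2 * (∑ l, σ y k l * (y l - x l)) / Real.sqrt (∑ l, (y l - x l) ^ 2)
            - ((n : ℝ) + 2) *
                ((∑ l, ∑ m, (y l - x l) * σ y l m * (y m - x m)) / (∑ l, (y l - x l) ^ 2))
                * ((y k - x k) / Real.sqrt (∑ l, (y l - x l) ^ 2))
            + (∑ l, σ y l l) * ((y k - x k) / Real.sqrt (∑ l, (y l - x l) ^ 2)))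
            / (Real.sqrt (∑ l, (y l - x l) ^ 2)) ^ (n + 1) ∂ν)
      + sBall x τ Tτ k) :=
  nonlocal_representation_general hn u hu ν hνfin σ hσmeas hσpolar x τ ρ hρ hρτ Tρ Tτ hTρ hTτ
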